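/- arXiv:1407.1002 — 5 statements merged into one kernel-verified Lean document; each statement's English description precedes it below -/
import Mathlib

section
/- Let f1, f2 : ℝ → ℝ → ℝ be smooth, and let u solve u' = f1(t,u) + f2(t,u), u(0) = u0 on [0,h]. Let φ1 solve φ1' = f1(t,φ1), φ1(0) = u0, and φ2 solve φ2' = f2(t,φ2), φ2(0) = φ1(h). Then there exists a constant C (depending on bounds of f1, f2 and their first derivatives near the solution, but not on h) such that |u(h) − φ2(h)| ≤ C h² for all sufficiently small h > 0. -/
open Set

/-- Mean value inequality on `[0, b]` with absolute values. -/
lemma my_mvt_abs {v vd : ℝ → ℝ} {b C : ℝ} (hb : 0 ≤ b)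
    (hd : ∀ t ∈ Icc (0:ℝ) b, HasDerivAt v (vd t) t)
    (hC : ∀ t ∈ Icc (0:ℝ) b, |vd t| ≤ C) : |v b - v 0| ≤ C * b := by
  have := (convex_Icc (0:ℝ) b).norm_image_sub_le_of_norm_hasDerivWithin_le
    (f := v) (f' := vd) (fun t ht => (hd t ht).hasDerivWithinAt)
    (fun t ht => by simpa [Real.norm_eq_abs] using hC t ht)
    (left_mem_Icc.2 hb) (right_mem_Icc.2 hb)
  simpa [Real.norm_eq_abs, abs_of_nonneg hb] using this

/-- A priori bound: the solution stays `M*t`-close to its initial value. -/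
lemma my_bootstrap {g : ℝ → ℝ → ℝ} {M u0 v0 h : ℝ} {v : ℝ → ℝ}
    (hM1 : 1 ≤ M)
    (hgM : ∀ t ∈ Icc (0:ℝ) 1, ∀ x ∈ Icc (u0-1) (u0+1), |g t x| ≤ M)
    (hh0 : 0 ≤ h) (hh1 : h ≤ 1) (hhM : h ≤ 1/(4*M))
    (hv0 : v 0 = v0) (hv0' : |v0 - u0| ≤ 1/2)
    (hv : ∀ t ∈ Icc (0:ℝ) h, HasDerivAt v (g t (v t)) t) :
    ∀ t ∈ Icc (0:ℝ) h, |v t - v0| ≤ M * t := by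
  have hMpos : (0:ℝ) < M := lt_of_lt_of_le one_pos hM1
  have hMh : M * h ≤ 1/4 := by
    have := mul_le_mul_of_nonneg_left hhM (le_of_lt hMpos)
    calc M * h ≤ M * (1/(4*M)) := this
    _ = 1/4 := by field_simp
  -- first, the rough bound `|v t - v0| ≤ 1/2`
  have small : ∀ t ∈ Icc (0:ℝ) h, |v t - v0| ≤ 1/2 := by
    by_contra hbad
    push_neg at hbad
    obtain ⟨tb, htb, htb2⟩ := hbad
    have hcont : ContinuousOn v (Icc 0 h) :=
      fun t ht => (hv t ht).continuousAt.continuousWithinAt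
    set B : Set ℝ := Icc 0 h ∩ (fun t => |v t - v0|) ⁻¹' (Ici (1/2)) with hBdef
    have hBne : B.Nonempty := ⟨tb, htb, le_of_lt htb2⟩
    have hBclosed : IsClosed B := by
      apply ContinuousOn.preimage_isClosed_of_isClosed
        (((hcont.sub continuousOn_const).abs)) isClosed_Icc isClosed_Ici
    have hBbdd : BddBelow B := ⟨0, fun t ht => ht.1.1⟩
    set t1 := sInf B with ht1def
    have ht1B : t1 ∈ B := hBclosed.csInf_mem hBne hBbdd
    have ht1Icc : t1 ∈ Icc 0 h := ht1B.1
    have ht1ge : 1/2 ≤ |v t1 - v0| := ht1B.2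
    have ht1pos : 0 < t1 := by
      rcases lt_or_eq_of_le ht1Icc.1 with h' | h'
      · exact h'
      · exfalso
        rw [← h', hv0] at ht1ge
        simp at ht1ge
        linarith
    -- on `[0, t1)` the value stays `< 1/2`, hence in the band and bounded by `M*t`
    have hlt : ∀ t ∈ Ico (0:ℝ) t1, |v t - v0| < 1/2 := by
      intro t ht
      by_contra hge
      push_neg at hge
      have : t ∈ B := ⟨⟨ht.1, le_trans (le_of_lt ht.2) ht1Icc.2⟩, hge⟩
      exact absurd (csInf_le hBbdd this) (not_le.2 ht.2)
    have hsmall' : ∀ t ∈ Ico (0:ℝ) t1, |v t - v0| ≤ M * h := by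
      intro t ht
      have hth : t ≤ h := le_trans (le_of_lt ht.2) ht1Icc.2
      have hmvt : |v t - v0| ≤ M * t := by
        rw [← hv0]
        apply my_mvt_abs ht.1 (fun s hs => hv s ⟨hs.1, le_trans hs.2 hth⟩)
        intro s hs
        have hs' : s ∈ Ico (0:ℝ) t1 := ⟨hs.1, lt_of_le_of_lt hs.2 ht.2⟩
        have hvs : v s ∈ Icc (u0-1) (u0+1) := by
          have h1 : |v s - v0| < 1/2 := hlt s hs'
          have h2 : |v s - u0| ≤ 1 := by
            have := abs_sub_abs_le_abs_sub (v s - u0) (v s - v0)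
            have htri : |v s - u0| ≤ |v s - v0| + |v0 - u0| := by
              calc |v s - u0| = |(v s - v0) + (v0 - u0)| := by ring_nf
              _ ≤ |v s - v0| + |v0 - u0| := abs_add_le _ _
            linarith
          rw [abs_le] at h2
          constructor <;> linarith [h2.1, h2.2]
        exact hgM s ⟨hs.1, le_trans (le_trans hs.2 hth) hh1⟩ (v s) hvs
      calc |v t - v0| ≤ M * t := hmvt
      _ ≤ M * h := by nlinarith
    -- pass to the limit `t → t1⁻`
    have htend : Filter.Tendsto (fun t => |v t - v0|) (nhdsWithin t1 (Iio t1))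
        (nhds |v t1 - v0|) := by
      have : ContinuousAt (fun t => |v t - v0|) t1 :=
        ((hv t1 ht1Icc).continuousAt.sub continuousAt_const).abs
      exact this.tendsto.mono_left nhdsWithin_le_nhds
    have hev : ∀ᶠ t in nhdsWithin t1 (Iio t1), |v t - v0| ≤ M * h := by
      filter_upwards [Ioo_mem_nhdsLT_of_mem (⟨ht1pos, le_refl t1⟩ : t1 ∈ Ioc 0 t1)]
        with t ht
      exact hsmall' t ⟨le_of_lt ht.1, ht.2⟩
    have : |v t1 - v0| ≤ M * h := le_of_tendsto htend hev
    linarith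
  -- now the sharp bound
  intro t ht
  rw [← hv0]
  apply my_mvt_abs ht.1 (fun s hs => hv s ⟨hs.1, le_trans hs.2 ht.2⟩)
  intro s hs
  have hsIcc : s ∈ Icc (0:ℝ) h := ⟨hs.1, le_trans hs.2 ht.2⟩
  have hvs : v s ∈ Icc (u0-1) (u0+1) := by
    have h1 : |v s - v0| ≤ 1/2 := small s hsIcc
    have h2 : |v s - u0| ≤ 1 := by
      calc |v s - u0| = |(v s - v0) + (v0 - u0)| := by ring_nf
      _ ≤ |v s - v0| + |v0 - u0| := abs_add_le _ _
      _ ≤ 1 := by linarith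
    rw [abs_le] at h2
    constructor <;> linarith [h2.1, h2.2]
  exact hgM s ⟨hs.1, le_trans hsIcc.2 hh1⟩ (v s) hvs

/-- First order Taylor estimate for the flow. -/
lemma my_taylor {g : ℝ → ℝ → ℝ} {M L u0 v0 h : ℝ} {v : ℝ → ℝ}
    (hM1 : 1 ≤ M) (hL0 : 0 ≤ L)
    (hgM : ∀ t ∈ Icc (0:ℝ) 1, ∀ x ∈ Icc (u0-1) (u0+1), |g t x| ≤ M)
    (hgL : ∀ t ∈ Icc (0:ℝ) 1, ∀ x ∈ Icc (u0-1) (u0+1), ∀ s ∈ Icc (0:ℝ) 1,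
      ∀ y ∈ Icc (u0-1) (u0+1), |g t x - g s y| ≤ L * (|t - s| + |x - y|))
    (hh0 : 0 ≤ h) (hh1 : h ≤ 1) (hhM : h ≤ 1/(4*M))
    (hv0 : v 0 = v0) (hv0' : |v0 - u0| ≤ 1/2)
    (hv : ∀ t ∈ Icc (0:ℝ) h, HasDerivAt v (g t (v t)) t) :
    |v h - v0 - h * g 0 v0| ≤ L * (1 + M) * h^2 := by
  have hMpos : (0:ℝ) < M := lt_of_lt_of_le one_pos hM1
  have hMh : M * h ≤ 1/4 := by
    have := mul_le_mul_of_nonneg_left hhM (le_of_lt hMpos)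
    calc M * h ≤ M * (1/(4*M)) := this
    _ = 1/4 := by field_simp
  have boot := my_bootstrap hM1 hgM hh0 hh1 hhM hv0 hv0' hv
  have hv0mem : v0 ∈ Icc (u0-1) (u0+1) := by
    rw [abs_le] at hv0'
    constructor <;> linarith [hv0'.1, hv0'.2]
  have hw : ∀ t ∈ Icc (0:ℝ) h,
      HasDerivAt (fun t => v t - v0 - t * g 0 v0) (g t (v t) - g 0 v0) t := by
    intro t ht
    exact (((hv t ht).sub_const v0).sub (hasDerivAt_mul_const (g 0 v0)))
  have hbound : ∀ t ∈ Icc (0:ℝ) h, |g t (v t) - g 0 v0| ≤ L * (1 + M) * h := by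
    intro t ht
    have hbt : |v t - v0| ≤ M * t := boot t ht
    have hvt : v t ∈ Icc (u0-1) (u0+1) := by
      have h2 : |v t - u0| ≤ 1 := by
        calc |v t - u0| = |(v t - v0) + (v0 - u0)| := by ring_nf
        _ ≤ |v t - v0| + |v0 - u0| := abs_add_le _ _
        _ ≤ M * t + 1/2 := by linarith
        _ ≤ 1 := by nlinarith [ht.1, ht.2]
      rw [abs_le] at h2
      constructor <;> linarith [h2.1, h2.2]
    have := hgL t ⟨ht.1, le_trans ht.2 hh1⟩ (v t) hvt 0 (by constructor <;> norm_num)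
      v0 hv0mem
    calc |g t (v t) - g 0 v0| ≤ L * (|t - 0| + |v t - v0|) := this
    _ ≤ L * (h + M * h) := by
        apply mul_le_mul_of_nonneg_left _ hL0
        rw [sub_zero, abs_of_nonneg ht.1]
        nlinarith [ht.1, ht.2]
    _ = L * (1 + M) * h := by ring
  have := my_mvt_abs (v := fun t => v t - v0 - t * g 0 v0)
    (vd := fun t => g t (v t) - g 0 v0) hh0 hw hbound
  have heq : (fun t => v t - v0 - t * g 0 v0) 0 = 0 := by simp [hv0]
  simp only [hv0, sub_self, zero_mul, sub_zero] at this
  calc |v h - v0 - h * g 0 v0| ≤ L * (1 + M) * h * h := this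
  _ = L * (1 + M) * h^2 := by ring

/-- Lipschitz estimate on the compact box from smoothness. -/
lemma my_lip (f : ℝ → ℝ → ℝ) (hf : ContDiff ℝ (⊤ : ℕ∞) (Function.uncurry f)) (u0 : ℝ) :
    ∃ L, 0 ≤ L ∧ ∀ t ∈ Icc (0:ℝ) 1, ∀ x ∈ Icc (u0-1) (u0+1), ∀ s ∈ Icc (0:ℝ) 1,
      ∀ y ∈ Icc (u0-1) (u0+1), |f t x - f s y| ≤ L * (|t - s| + |x - y|) := by
  set K : Set (ℝ × ℝ) := Icc (0:ℝ) 1 ×ˢ Icc (u0-1) (u0+1) with hKdef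
  have hKcomp : IsCompact K := isCompact_Icc.prod isCompact_Icc
  have hKconv : Convex ℝ K := (convex_Icc _ _).prod (convex_Icc _ _)
  have hdiff : Differentiable ℝ (Function.uncurry f) := hf.differentiable (by simp)
  have hfd : Continuous (fderiv ℝ (Function.uncurry f)) :=
    hf.continuous_fderiv (by simp)
  obtain ⟨L0, hL0⟩ := hKcomp.exists_bound_of_continuousOn
    ((hfd.comp continuous_id).continuousOn)
  refine ⟨max L0 0, le_max_right _ _, ?_⟩
  intro t ht x hx s hs y hy
  have hmem1 : (t, x) ∈ K := ⟨ht, hx⟩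
  have hmem2 : (s, y) ∈ K := ⟨hs, hy⟩
  have key := hKconv.norm_image_sub_le_of_norm_fderiv_le
    (f := Function.uncurry f) (fun p _ => hdiff p)
    (fun p hp => le_trans (hL0 p hp) (le_max_left L0 0)) hmem2 hmem1
  have hnorm : ‖((t, x) : ℝ × ℝ) - (s, y)‖ ≤ |t - s| + |x - y| := by
    rw [Prod.norm_def]
    simp only [Prod.fst_sub, Prod.snd_sub, Real.norm_eq_abs]
    exact max_le (le_add_of_nonneg_right (abs_nonneg _))
      (le_add_of_nonneg_left (abs_nonneg _))
  calc |f t x - f s y|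
      = ‖Function.uncurry f (t, x) - Function.uncurry f (s, y)‖ := by
        simp [Function.uncurry, Real.norm_eq_abs]
    _ ≤ max L0 0 * ‖((t, x) : ℝ × ℝ) - (s, y)‖ := key
    _ ≤ max L0 0 * (|t - s| + |x - y|) :=
        mul_le_mul_of_nonneg_left hnorm (le_max_right _ _)

set_option maxHeartbeats 1000000 in
/-- Lie–Trotter splitting with exact sub-flows for `u' = f1(t,u) + f2(t,u)` has
local splitting error `O(h²)`. -/
theorem stmt_0 (f1 f2 : ℝ → ℝ → ℝ)
    (hf1 : ContDiff ℝ (⊤ : ℕ∞) (Function.uncurry f1))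
    (hf2 : ContDiff ℝ (⊤ : ℕ∞) (Function.uncurry f2)) (u0 : ℝ) :
    ∃ C > (0:ℝ), ∃ h0 > (0:ℝ), ∀ h : ℝ, 0 < h → h ≤ h0 →
      ∀ u φ1 φ2 : ℝ → ℝ,
        u 0 = u0 →
        (∀ t ∈ Icc (0:ℝ) h, HasDerivAt u (f1 t (u t) + f2 t (u t)) t) →
        φ1 0 = u0 →
        (∀ t ∈ Icc (0:ℝ) h, HasDerivAt φ1 (f1 t (φ1 t)) t) →
        φ2 0 = φ1 h →
        (∀ t ∈ Icc (0:ℝ) h, HasDerivAt φ2 (f2 t (φ2 t)) t) →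
        |u h - φ2 h| ≤ C * h ^ 2 := by
  -- compact box and bounds
  have hKcomp : IsCompact (Icc (0:ℝ) 1 ×ˢ Icc (u0-1) (u0+1)) :=
    isCompact_Icc.prod isCompact_Icc
  obtain ⟨M1, hM1⟩ := hKcomp.exists_bound_of_continuousOn hf1.continuous.continuousOn
  obtain ⟨M2, hM2⟩ := hKcomp.exists_bound_of_continuousOn hf2.continuous.continuousOn
  obtain ⟨L1, hL1nn, hL1⟩ := my_lip f1 hf1 u0
  obtain ⟨L2, hL2nn, hL2⟩ := my_lip f2 hf2 u0
  set M : ℝ := max 1 (max M1 M2) with hMdef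
  have hM1le : (1:ℝ) ≤ M := le_max_left _ _
  have hMpos : (0:ℝ) < M := lt_of_lt_of_le one_pos hM1le
  have hbound1 : ∀ t ∈ Icc (0:ℝ) 1, ∀ x ∈ Icc (u0-1) (u0+1), |f1 t x| ≤ M := by
    intro t ht x hx
    have := hM1 (t, x) ⟨ht, hx⟩
    simp only [Function.uncurry, Real.norm_eq_abs] at this
    exact le_trans this (le_trans (le_max_left _ _) (le_max_right _ _))
  have hbound2 : ∀ t ∈ Icc (0:ℝ) 1, ∀ x ∈ Icc (u0-1) (u0+1), |f2 t x| ≤ M := by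
    intro t ht x hx
    have := hM2 (t, x) ⟨ht, hx⟩
    simp only [Function.uncurry, Real.norm_eq_abs] at this
    exact le_trans this (le_trans (le_max_right _ _) (le_max_right _ _))
  have hboundS : ∀ t ∈ Icc (0:ℝ) 1, ∀ x ∈ Icc (u0-1) (u0+1),
      |f1 t x + f2 t x| ≤ 2*M := by
    intro t ht x hx
    calc |f1 t x + f2 t x| ≤ |f1 t x| + |f2 t x| := abs_add_le _ _
    _ ≤ 2*M := by linarith [hbound1 t ht x hx, hbound2 t ht x hx]
  have hLSum : ∀ t ∈ Icc (0:ℝ) 1, ∀ x ∈ Icc (u0-1) (u0+1), ∀ s ∈ Icc (0:ℝ) 1,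
      ∀ y ∈ Icc (u0-1) (u0+1),
      |(f1 t x + f2 t x) - (f1 s y + f2 s y)| ≤ (L1 + L2) * (|t - s| + |x - y|) := by
    intro t ht x hx s hs y hy
    calc |(f1 t x + f2 t x) - (f1 s y + f2 s y)|
        = |(f1 t x - f1 s y) + (f2 t x - f2 s y)| := by ring_nf
      _ ≤ |f1 t x - f1 s y| + |f2 t x - f2 s y| := abs_add_le _ _
      _ ≤ (L1 + L2) * (|t - s| + |x - y|) := by
          have := hL1 t ht x hx s hs y hy
          have := hL2 t ht x hx s hs y hy
          nlinarith [abs_nonneg (t - s), abs_nonneg (x - y)]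
  refine ⟨(L1+L2)*(1+2*M) + L2*(1+M) + L1*(1+M) + L2*M + 1, by nlinarith, 
    min 1 (1/(8*M)), lt_min one_pos (by positivity), ?_⟩
  intro h hhpos hhle u φ1 φ2 hu0 hu hφ10 hφ1 hφ20 hφ2
  have hh0 : 0 ≤ h := le_of_lt hhpos
  have hh1 : h ≤ 1 := le_trans hhle (min_le_left _ _)
  have hh8 : h ≤ 1/(8*M) := le_trans hhle (min_le_right _ _)
  have hh4 : h ≤ 1/(4*M) := by
    apply le_trans hh8
    apply div_le_div_of_nonneg_left one_pos.le (by positivity)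
    linarith
  have hh4' : h ≤ 1/(4*(2*M)) := by
    apply le_trans hh8
    apply le_of_eq
    ring_nf
  have hMh : M * h ≤ 1/4 := by
    have := mul_le_mul_of_nonneg_left hh4 (le_of_lt hMpos)
    calc M * h ≤ M * (1/(4*M)) := this
    _ = 1/4 := by field_simp
  have hu00 : |u0 - u0| ≤ (1:ℝ)/2 := by simp
  -- Taylor estimate for u with vector field f1 + f2
  have hA := my_taylor (g := fun t x => f1 t x + f2 t x) (M := 2*M) (L := L1+L2)
    (by linarith) (by linarith) hboundS hLSum hh0 hh1 hh4' hu0 hu00 hu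
  -- Taylor estimate for φ1
  have hB := my_taylor (g := f1) (M := M) (L := L1) hM1le hL1nn hbound1 hL1
    hh0 hh1 hh4 hφ10 hu00 hφ1
  -- bootstrap for φ1: φ1 h close to u0
  have hboot1 := my_bootstrap (g := f1) (M := M) hM1le hbound1 hh0 hh1 hh4
    hφ10 hu00 hφ1 h ⟨hh0, le_refl h⟩
  have hφ1h : |φ1 h - u0| ≤ 1/2 := by
    calc |φ1 h - u0| ≤ M * h := hboot1
    _ ≤ 1/2 := by linarith
  -- Taylor estimate for φ2 (initial value φ1 h)
  have hC := my_taylor (g := f2) (M := M) (L := L2) hM1le hL2nn hbound2 hL2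
    hh0 hh1 hh4 hφ20 hφ1h hφ2
  -- Lipschitz comparison of f2 at φ1 h vs u0
  have hφ1hmem : φ1 h ∈ Icc (u0-1) (u0+1) := by
    rw [abs_le] at hφ1h
    constructor <;> linarith [hφ1h.1, hφ1h.2]
  have h0mem : (0:ℝ) ∈ Icc (0:ℝ) 1 := by constructor <;> norm_num
  have hu0mem : u0 ∈ Icc (u0-1) (u0+1) := by constructor <;> linarith
  have hD : |f2 0 (φ1 h) - f2 0 u0| ≤ L2 * (M * h) := by
    have := hL2 0 h0mem (φ1 h) hφ1hmem 0 h0mem u0 hu0mem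
    calc |f2 0 (φ1 h) - f2 0 u0| ≤ L2 * (|(0:ℝ) - 0| + |φ1 h - u0|) := this
    _ ≤ L2 * (M * h) := by
        apply mul_le_mul_of_nonneg_left _ hL2nn
        simpa using hboot1
  have hD' : |h * (f2 0 (φ1 h) - f2 0 u0)| ≤ L2 * M * h^2 := by
    rw [abs_mul, abs_of_nonneg hh0]
    calc h * |f2 0 (φ1 h) - f2 0 u0| ≤ h * (L2 * (M * h)) :=
      mul_le_mul_of_nonneg_left hD hh0
    _ = L2 * M * h^2 := by ring
  -- combine
  have hsq : (0:ℝ) ≤ h^2 := sq_nonneg h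
  have hid : u h - φ2 h =
      (u h - u0 - h * (f1 0 u0 + f2 0 u0))
      - (φ2 h - φ1 h - h * f2 0 (φ1 h))
      - (φ1 h - u0 - h * f1 0 u0)
      - h * (f2 0 (φ1 h) - f2 0 u0) := by
    ring
  rw [hid, abs_le]
  rw [abs_le] at hA hB hC hD'
  constructor <;> [nlinarith [hA.1, hB.1, hC.1, hD'.1, hA.2, hB.2, hC.2, hD'.2];
    nlinarith [hA.1, hB.1, hC.1, hD'.1, hA.2, hB.2, hC.2, hD'.2]]
end

section
/- Let A, B be n×n real matrices. The Strang splitting approximation exp(hA/2) exp(hB) exp(hA/2) satisfies ‖exp(h(A+B)) − exp(hA/2) exp(hB) exp(hA/2)‖ ≤ C h³ for some constant C depending only on ‖A‖ and ‖B‖, for all h ∈ [0,1]. -/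
/-!
Both `exp (h (A + B))` and `exp (hA/2) exp (hB) exp (hA/2)` are power series in `h` whose
coefficient of `h ^ k` is homogeneous of degree `k` in `A, B`; the second one is a double Cauchy
product of exponential series. The coefficients of `h ^ 0`, `h ^ 1`, `h ^ 2` agree (the symmetric
arrangement is what makes the `h ^ 2` coefficients, with their non-commuting `AB` and `BA`
terms, match), so for `0 ≤ h ≤ 1` the difference is bounded by `h ^ 3` times the absolutely
convergent sum of the norms of the remaining coefficients.
-/

open Matrix NormedSpace

attribute [local instance] Matrix.linftyOpNormedAddCommGroup Matrix.linftyOpNormedRing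
  Matrix.linftyOpNormedAlgebra

open Finset
open scoped Nat

noncomputable section

section CauchyProduct

variable {R : Type*}

def cauchyProduct [Semiring R] (u v : ℕ → R) (k : ℕ) : R :=
  ∑ ij ∈ antidiagonal k, u ij.1 * v ij.2

theorem cauchyProduct_pow_smul {𝕜 : Type*} [CommSemiring 𝕜] [Semiring R] [Algebra 𝕜 R]
    (t : 𝕜) (u v : ℕ → R) :
    cauchyProduct (fun i ↦ t ^ i • u i) (fun j ↦ t ^ j • v j) =
      fun k ↦ t ^ k • cauchyProduct u v k := by
  funext k
  rw [cauchyProduct, cauchyProduct, smul_sum]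
  refine sum_congr rfl fun ij hij ↦ ?_
  rw [smul_mul_smul_comm, ← pow_add, mem_antidiagonal.mp hij]

variable [NormedRing R] {u v : ℕ → R}

theorem summable_norm_cauchyProduct (hu : Summable fun k ↦ ‖u k‖)
    (hv : Summable fun k ↦ ‖v k‖) : Summable fun k ↦ ‖cauchyProduct u v k‖ :=
  summable_norm_sum_mul_antidiagonal_of_summable_norm hu hv

theorem tsum_mul_tsum_eq_tsum_cauchyProduct [CompleteSpace R] (hu : Summable fun k ↦ ‖u k‖)
    (hv : Summable fun k ↦ ‖v k‖) : (∑' k, u k) * ∑' k, v k = ∑' k, cauchyProduct u v k :=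
  tsum_mul_tsum_eq_tsum_sum_antidiagonal_of_summable_norm hu hv

end CauchyProduct

theorem norm_tsum_pow_smul_le_of_eq_zero {E : Type*} [NormedAddCommGroup E] [NormedSpace ℝ E]
    {d : ℕ → E} {m : ℕ} (hd : ∀ k < m, d k = 0) (hs : Summable fun k ↦ ‖d k‖)
    {t : ℝ} (ht₀ : 0 ≤ t) (ht₁ : t ≤ 1) :
    ‖∑' k, t ^ k • d k‖ ≤ (∑' k, ‖d k‖) * t ^ m := by
  have hbound (k : ℕ) : ‖t ^ k • d k‖ ≤ t ^ m * ‖d k‖ := by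
    rcases lt_or_ge k m with hk | hk
    · simp [hd k hk]
    · rw [norm_smul, Real.norm_of_nonneg (by positivity)]
      exact mul_le_mul_of_nonneg_right (pow_le_pow_of_le_one ht₀ ht₁ hk) (norm_nonneg _)
  have hs' : Summable fun k ↦ ‖t ^ k • d k‖ :=
    (hs.mul_left _).of_nonneg_of_le (fun _ ↦ norm_nonneg _) hbound
  calc ‖∑' k, t ^ k • d k‖ ≤ ∑' k, ‖t ^ k • d k‖ := norm_tsum_le_tsum_norm hs'
    _ ≤ ∑' k, t ^ m * ‖d k‖ := hs'.tsum_le_tsum hbound (hs.mul_left _)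
    _ = (∑' k, ‖d k‖) * t ^ m := by rw [tsum_mul_left, mul_comm]

section Exponential

variable {𝔸 : Type*}

section Algebraic

variable [Ring 𝔸] [Algebra ℝ 𝔸]

def expCoeff (x : 𝔸) (k : ℕ) : 𝔸 := (k !⁻¹ : ℝ) • x ^ k

def strangCoeff (x y : 𝔸) : ℕ → 𝔸 :=
  cauchyProduct (cauchyProduct (expCoeff x) (expCoeff y)) (expCoeff x)

theorem expCoeff_smul (t : ℝ) (x : 𝔸) : expCoeff (t • x) = fun k ↦ t ^ k • expCoeff x k := by
  funext k
  rw [expCoeff, expCoeff, smul_pow, smul_comm]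

theorem strangCoeff_smul (t : ℝ) (x y : 𝔸) :
    strangCoeff (t • x) (t • y) = fun k ↦ t ^ k • strangCoeff x y k := by
  simp only [strangCoeff, expCoeff_smul, cauchyProduct_pow_smul]

theorem expCoeff_add_add_eq_strangCoeff (x y : 𝔸) {k : ℕ} (hk : k < 3) :
    expCoeff (x + y + x) k = strangCoeff x y k := by
  interval_cases k <;>
    simp only [strangCoeff, cauchyProduct, expCoeff, Nat.sum_antidiagonal_succ,
      HasAntidiagonal.antidiagonal_zero, sum_singleton, Nat.factorial, Nat.cast_one,
      inv_one, pow_zero, pow_one, sq, one_smul, smul_add, smul_smul, mul_add,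
      add_mul, one_mul, mul_one, zero_add, Nat.reduceAdd, Algebra.mul_smul_comm,
      Algebra.smul_mul_assoc] <;>
    module

end Algebraic

variable [NormedRing 𝔸] [NormedAlgebra ℝ 𝔸]

theorem summable_norm_expCoeff (x : 𝔸) : Summable fun k ↦ ‖expCoeff x k‖ :=
  norm_expSeries_summable' x

theorem summable_norm_strangCoeff (x y : 𝔸) : Summable fun k ↦ ‖strangCoeff x y k‖ :=
  summable_norm_cauchyProduct
    (summable_norm_cauchyProduct (summable_norm_expCoeff x) (summable_norm_expCoeff y))
    (summable_norm_expCoeff x)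

theorem summable_norm_expCoeff_sub_strangCoeff (x y z : 𝔸) :
    Summable fun k ↦ ‖expCoeff z k - strangCoeff x y k‖ :=
  ((summable_norm_expCoeff z).add (summable_norm_strangCoeff x y)).of_nonneg_of_le
    (fun _ ↦ norm_nonneg _) fun _ ↦ norm_sub_le _ _

theorem exp_eq_tsum_expCoeff (x : 𝔸) : exp x = ∑' k, expCoeff x k := by
  rw [exp_eq_tsum ℝ]
  rfl

variable [CompleteSpace 𝔸]

theorem exp_mul_exp_mul_exp_eq_tsum_strangCoeff (x y : 𝔸) :
    exp x * exp y * exp x = ∑' k, strangCoeff x y k := by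
  rw [exp_eq_tsum_expCoeff, exp_eq_tsum_expCoeff,
    tsum_mul_tsum_eq_tsum_cauchyProduct (summable_norm_expCoeff x) (summable_norm_expCoeff y),
    tsum_mul_tsum_eq_tsum_cauchyProduct
      (summable_norm_cauchyProduct (summable_norm_expCoeff x) (summable_norm_expCoeff y))
      (summable_norm_expCoeff x)]
  rfl

theorem exp_sub_exp_mul_exp_mul_exp_eq_tsum (t : ℝ) (x y : 𝔸) :
    exp (t • (x + y + x)) - exp (t • x) * exp (t • y) * exp (t • x) =
      ∑' k, t ^ k • (expCoeff (x + y + x) k - strangCoeff x y k) := by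
  rw [exp_eq_tsum_expCoeff, exp_mul_exp_mul_exp_eq_tsum_strangCoeff,
    ← (summable_norm_expCoeff (t • (x + y + x))).of_norm.tsum_sub
      (summable_norm_strangCoeff (t • x) (t • y)).of_norm, expCoeff_smul, strangCoeff_smul]
  simp only [smul_sub]

end Exponential

end

/-- Strang splitting is locally third-order accurate for matrix exponentials:
`‖exp(h(A+B)) − exp(hA/2)exp(hB)exp(hA/2)‖ ≤ C h³` for `h ∈ [0,1]`. -/
theorem stmt_2 (n : ℕ) (A B : Matrix (Fin n) (Fin n) ℝ) :
    ∃ C : ℝ, ∀ h : ℝ, h ∈ Set.Icc (0:ℝ) 1 →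
      ‖NormedSpace.exp (h • (A + B)) -
        (NormedSpace.exp ((h / 2) • A)) * (NormedSpace.exp (h • B)) * (NormedSpace.exp ((h / 2) • A))‖
        ≤ C * h ^ 3 := by
  set X : Matrix (Fin n) (Fin n) ℝ := (2⁻¹ : ℝ) • A
  refine ⟨∑' k, ‖expCoeff (X + B + X) k - strangCoeff X B k‖, fun h ⟨h₀, h₁⟩ ↦ ?_⟩
  have hsum : A + B = X + B + X := by module
  have hhalf : (h / 2) • A = h • X := by rw [smul_smul, div_eq_mul_inv]
  rw [hsum, hhalf]
  -- not `rw`: the matrix `*`, `-` agree with those of the local normed ring only up to unfolding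
  refine (congrArg norm (exp_sub_exp_mul_exp_mul_exp_eq_tsum h X B)).trans_le ?_
  exact norm_tsum_pow_smul_le_of_eq_zero
    (fun k hk ↦ sub_eq_zero.mpr (expCoeff_add_add_eq_strangCoeff X B hk))
    (summable_norm_expCoeff_sub_strangCoeff X B _) h₀ h₁
end

section
/- Suppose Lie–Trotter splitting with exact sub-flows is applied to the error IVP Q' = G(t,Q), Q(0)=0 on [0,h], where G = G1 + G2, and that the rescaled functions Ḡν(t, q̄) = h^{−k} Gν(t, h^k q̄) correspond to sub-flows Q̄ν with Q̄ν uniquely solving the rescaled sub-problems. Then the Lie–Trotter approximation Q2(h) of Q(h) satisfies Q2(h) = h^k Q̄2(h), where Q̄2(h) is the Lie–Trotter approximation of the rescaled problem. Consequently, if the rescaled Lie–Trotter error is O(h²), the unscaled error Q(h) − Q2(h) is O(h^{k+2}). -/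
open Set

/-!
Scaling a solution of `R' = G(t, R)` by `c⁻¹` gives a solution of the rescaled equation
`R̄' = c⁻¹ G(t, c R̄)`. Applied to each exact sub-flow in turn, uniqueness of the rescaled
sub-flows identifies them with the scaled unscaled ones, so `Q₂ = h^k Q̄₂`, and the error
`Q(h) - Q₂(h) = h^k (h^{-k} Q(h) - Q̄₂(h))` inherits the factor `h^k`.
-/

section Rescaling

variable {𝕜 : Type*} [NontriviallyNormedField 𝕜] {E : Type*} [NormedAddCommGroup E]
  [NormedSpace 𝕜 E] {c : 𝕜} {G Gbar : 𝕜 → E → E} {s : Set 𝕜}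

theorem HasDerivAt.inv_smul_of_rescaled (hc : c ≠ 0) (hGbar : ∀ t q, Gbar t q = c⁻¹ • G t (c • q))
    {R : 𝕜 → E} {t : 𝕜} (hR : HasDerivAt R (G t (R t)) t) :
    HasDerivAt (fun t => c⁻¹ • R t) (Gbar t (c⁻¹ • R t)) t := by
  rw [hGbar, smul_inv_smul₀ hc]
  exact hR.const_smul c⁻¹

theorem eq_smul_of_rescaled_unique (hc : c ≠ 0) (hGbar : ∀ t q, Gbar t q = c⁻¹ • G t (c • q))
    {a : 𝕜} {x₀ : E} {R Rbar : 𝕜 → E} (hR₀ : R a = c • x₀)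
    (hR : ∀ t ∈ s, HasDerivAt R (G t (R t)) t)
    (huniq : ∀ S : 𝕜 → E, S a = x₀ → (∀ t ∈ s, HasDerivAt S (Gbar t (S t)) t) →
      ∀ t ∈ s, S t = Rbar t) :
    ∀ t ∈ s, R t = c • Rbar t := by
  intro t ht
  have hscaled : c⁻¹ • R t = Rbar t :=
    huniq (fun t => c⁻¹ • R t) (by rw [hR₀, inv_smul_smul₀ hc])
      (fun t ht => (hR t ht).inv_smul_of_rescaled hc hGbar) t ht
  rw [← hscaled, smul_inv_smul₀ hc]

theorem norm_sub_smul_eq_norm_mul (hc : c ≠ 0) (x y : E) :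
    ‖x - c • y‖ = ‖c‖ * ‖c⁻¹ • x - y‖ := by
  rw [← norm_smul, smul_sub, smul_inv_smul₀ hc]

end Rescaling

theorem stmt_6_general (n : ℕ) (k : ℕ) (h : ℝ) (hh : 0 < h)
    (G1 G2 : ℝ → EuclideanSpace ℝ (Fin n) → EuclideanSpace ℝ (Fin n))
    (Gbar1 Gbar2 : ℝ → EuclideanSpace ℝ (Fin n) → EuclideanSpace ℝ (Fin n))
    (hGbar1 : ∀ t q, Gbar1 t q = (h ^ k)⁻¹ • G1 t ((h ^ k) • q))
    (hGbar2 : ∀ t q, Gbar2 t q = (h ^ k)⁻¹ • G2 t ((h ^ k) • q))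
    -- unscaled Lie–Trotter sub-flows
    (Q1 Q2 : ℝ → EuclideanSpace ℝ (Fin n))
    (hQ1_0 : Q1 0 = 0)
    (hQ1 : ∀ t ∈ Icc (0:ℝ) h, HasDerivAt Q1 (G1 t (Q1 t)) t)
    (hQ2_0 : Q2 0 = Q1 h)
    (hQ2 : ∀ t ∈ Icc (0:ℝ) h, HasDerivAt Q2 (G2 t (Q2 t)) t)
    -- rescaled Lie–Trotter sub-flows
    (Qbar1 Qbar2 : ℝ → EuclideanSpace ℝ (Fin n))
    -- uniqueness of the rescaled sub-flows
    (huniq1 : ∀ R : ℝ → EuclideanSpace ℝ (Fin n), R 0 = 0 →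
      (∀ t ∈ Icc (0:ℝ) h, HasDerivAt R (Gbar1 t (R t)) t) → ∀ t ∈ Icc (0:ℝ) h, R t = Qbar1 t)
    (huniq2 : ∀ R : ℝ → EuclideanSpace ℝ (Fin n), R 0 = Qbar1 h →
      (∀ t ∈ Icc (0:ℝ) h, HasDerivAt R (Gbar2 t (R t)) t) → ∀ t ∈ Icc (0:ℝ) h, R t = Qbar2 t) :
    Q2 h = (h ^ k) • Qbar2 h ∧
    ∀ (Q : ℝ → EuclideanSpace ℝ (Fin n)) (C : ℝ), Q 0 = 0 →
      (∀ t ∈ Icc (0:ℝ) h, HasDerivAt Q (G1 t (Q t) + G2 t (Q t)) t) →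
      ‖(h ^ k)⁻¹ • Q h - Qbar2 h‖ ≤ C * h ^ 2 →
      ‖Q h - Q2 h‖ ≤ C * h ^ (k + 2) := by
  have hc : h ^ k ≠ 0 := pow_ne_zero k hh.ne'
  have hend : h ∈ Icc (0:ℝ) h := right_mem_Icc.2 hh.le
  have hQ1h : Q1 h = h ^ k • Qbar1 h :=
    eq_smul_of_rescaled_unique hc hGbar1 (by rw [hQ1_0, smul_zero]) hQ1 huniq1 h hend
  have hQ2h : Q2 h = h ^ k • Qbar2 h :=
    eq_smul_of_rescaled_unique hc hGbar2 (hQ2_0.trans hQ1h) hQ2 huniq2 h hend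
  refine ⟨hQ2h, fun Q C _ _ hbound => ?_⟩
  rw [hQ2h, norm_sub_smul_eq_norm_mul hc, Real.norm_of_nonneg (by positivity)]
  calc h ^ k * ‖(h ^ k)⁻¹ • Q h - Qbar2 h‖ ≤ h ^ k * (C * h ^ 2) := by gcongr
    _ = C * h ^ (k + 2) := by ring

/-- Commutation of the `h^k` rescaling with exact Lie–Trotter splitting of the error
IVP `Q' = G1(t,Q) + G2(t,Q)`, `Q(0)=0`: the Lie–Trotter approximation satisfies
`Q2(h) = h^k Q̄2(h)`, and hence an `O(h²)` rescaled splitting error gives an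
`O(h^{k+2})` unscaled error. -/
theorem stmt_6 (n : ℕ) (k : ℕ) (hk : 1 ≤ k) (h : ℝ) (hh : 0 < h)
    (G1 G2 : ℝ → EuclideanSpace ℝ (Fin n) → EuclideanSpace ℝ (Fin n))
    (Gbar1 Gbar2 : ℝ → EuclideanSpace ℝ (Fin n) → EuclideanSpace ℝ (Fin n))
    (hGbar1 : ∀ t q, Gbar1 t q = (h ^ k)⁻¹ • G1 t ((h ^ k) • q))
    (hGbar2 : ∀ t q, Gbar2 t q = (h ^ k)⁻¹ • G2 t ((h ^ k) • q))
    -- unscaled Lie–Trotter sub-flows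
    (Q1 Q2 : ℝ → EuclideanSpace ℝ (Fin n))
    (hQ1_0 : Q1 0 = 0)
    (hQ1 : ∀ t ∈ Icc (0:ℝ) h, HasDerivAt Q1 (G1 t (Q1 t)) t)
    (hQ2_0 : Q2 0 = Q1 h)
    (hQ2 : ∀ t ∈ Icc (0:ℝ) h, HasDerivAt Q2 (G2 t (Q2 t)) t)
    -- rescaled Lie–Trotter sub-flows
    (Qbar1 Qbar2 : ℝ → EuclideanSpace ℝ (Fin n))
    (hQbar1_0 : Qbar1 0 = 0)
    (hQbar1 : ∀ t ∈ Icc (0:ℝ) h, HasDerivAt Qbar1 (Gbar1 t (Qbar1 t)) t)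
    (hQbar2_0 : Qbar2 0 = Qbar1 h)
    (hQbar2 : ∀ t ∈ Icc (0:ℝ) h, HasDerivAt Qbar2 (Gbar2 t (Qbar2 t)) t)
    -- uniqueness of the rescaled sub-flows
    (huniq1 : ∀ R : ℝ → EuclideanSpace ℝ (Fin n), R 0 = 0 →
      (∀ t ∈ Icc (0:ℝ) h, HasDerivAt R (Gbar1 t (R t)) t) → ∀ t ∈ Icc (0:ℝ) h, R t = Qbar1 t)
    (huniq2 : ∀ R : ℝ → EuclideanSpace ℝ (Fin n), R 0 = Qbar1 h →
      (∀ t ∈ Icc (0:ℝ) h, HasDerivAt R (Gbar2 t (R t)) t) → ∀ t ∈ Icc (0:ℝ) h, R t = Qbar2 t) :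
    Q2 h = (h ^ k) • Qbar2 h ∧
    ∀ (Q : ℝ → EuclideanSpace ℝ (Fin n)) (C : ℝ), Q 0 = 0 →
      (∀ t ∈ Icc (0:ℝ) h, HasDerivAt Q (G1 t (Q t) + G2 t (Q t)) t) →
      ‖(h ^ k)⁻¹ • Q h - Qbar2 h‖ ≤ C * h ^ 2 →
      ‖Q h - Q2 h‖ ≤ C * h ^ (k + 2) :=
  stmt_6_general n k h hh G1 G2 Gbar1 Gbar2 hGbar1 hGbar2 Q1 Q2 hQ1_0 hQ1 hQ2_0 hQ2 Qbar1 Qbar2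
    huniq1 huniq2
end

section
/- Let f1, f2 be C² with bounded derivatives and let u solve u' = f1(t,u) + f2(t,u) on [0,h]. The fully discrete backward-Euler Lie–Trotter scheme ṽ = u0 + h f1(h, ṽ), v1 = ṽ + h f2(h, v1) satisfies |u(h) − v1| ≤ C h² for a constant C independent of h, for all sufficiently small h > 0. -/
open Set

/-! With `F = f1 + f2`, the exact solution satisfies `u h = u 0 + h F(h, u h) + O(h²)`: `u` is
Lipschitz with constant `sup |F|`, so `t ↦ F(t, u t)` varies by `O(h)` on `[0, h]`. The stage `ṽ` is
`O(h)`-close to `u h`, so replacing `f1(h, u h)` by `f1(h, ṽ)` costs `O(h²)`, while the implicit term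
`f2(h, v1)` contributes at most `M h |u h - v1|`, which is absorbed into the left side once
`M h ≤ 1/2`. -/

theorem abs_sub_le_of_norm_iteratedFDeriv_one_le {f : ℝ → ℝ → ℝ} {M : ℝ}
    (hf : Differentiable ℝ (Function.uncurry f))
    (hM : ∀ p, ‖iteratedFDeriv ℝ 1 (Function.uncurry f) p‖ ≤ M) (a x b y : ℝ) :
    |f a x - f b y| ≤ M * (|a - b| + |x - y|) := by
  have hM0 : 0 ≤ M := (norm_nonneg _).trans (hM 0)
  have hlip : LipschitzWith M.toNNReal (Function.uncurry f) :=
    lipschitzWith_of_nnnorm_fderiv_le hf fun p => by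
      rw [← NNReal.coe_le_coe, coe_nnnorm, Real.coe_toNNReal _ hM0, ← norm_iteratedFDeriv_one]
      exact hM p
  calc |f a x - f b y| ≤ M * max |a - b| |x - y| := by
        simpa [Real.coe_toNNReal _ hM0, Prod.dist_eq, Real.dist_eq] using
          hlip.dist_le_mul (a, x) (b, y)
    _ ≤ M * (|a - b| + |x - y|) := by
        gcongr
        exact max_le_add_of_nonneg (abs_nonneg _) (abs_nonneg _)

section ODE

variable {u g : ℝ → ℝ} {h : ℝ}

theorem abs_sub_le_of_hasDerivAt_of_abs_le {K : ℝ} (hu : ∀ t ∈ Icc 0 h, HasDerivAt u (g t) t)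
    (hg : ∀ t ∈ Icc 0 h, |g t| ≤ K) {s t : ℝ} (hs : s ∈ Icc 0 h) (ht : t ∈ Icc 0 h) :
    |u t - u s| ≤ K * |t - s| := by
  simpa only [Real.norm_eq_abs] using (convex_Icc 0 h).norm_image_sub_le_of_norm_hasDerivWithin_le
    (fun x hx => (hu x hx).hasDerivWithinAt) hg hs ht

theorem abs_sub_sub_mul_le_of_hasDerivAt {L : ℝ} (hh : 0 ≤ h)
    (hu : ∀ t ∈ Icc 0 h, HasDerivAt u (g t) t) (hg : ∀ t ∈ Icc 0 h, |g t - g h| ≤ L) :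
    |u h - u 0 - h * g h| ≤ L * h := by
  have hw : ∀ t ∈ Icc 0 h, HasDerivAt (fun s => u s - s * g h) (g t - g h) t :=
    fun t ht => (hu t ht).sub (hasDerivAt_mul_const (g h))
  have := abs_sub_le_of_hasDerivAt_of_abs_le hw hg (left_mem_Icc.2 hh) (right_mem_Icc.2 hh)
  simpa [abs_of_nonneg hh, sub_right_comm] using this

theorem abs_sub_backwardEuler_le {F : ℝ → ℝ → ℝ} {L K : ℝ} (hh : 0 ≤ h)
    (hlip : ∀ a x b y, |F a x - F b y| ≤ L * (|a - b| + |x - y|)) (hbd : ∀ t x, |F t x| ≤ K)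
    (hu : ∀ t ∈ Icc 0 h, HasDerivAt u (F t (u t)) t) :
    |u h - u 0 - h * F h (u h)| ≤ L * (1 + K) * h ^ 2 := by
  have hL : 0 ≤ L := by simpa using (abs_nonneg _).trans (hlip 1 0 0 0)
  have hh_mem : h ∈ Icc 0 h := right_mem_Icc.2 hh
  have hF : ∀ t ∈ Icc 0 h, |F t (u t) - F h (u h)| ≤ L * (1 + K) * h := by
    intro t ht
    have htime : |t - h| ≤ h := by rw [abs_le]; constructor <;> linarith [ht.1, ht.2]
    have hspace : |u t - u h| ≤ K * h :=
      (abs_sub_le_of_hasDerivAt_of_abs_le hu (fun s _ => hbd s (u s)) hh_mem ht).trans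
        (mul_le_mul_of_nonneg_left htime ((abs_nonneg _).trans (hbd 0 0)))
    calc |F t (u t) - F h (u h)| ≤ L * (|t - h| + |u t - u h|) := hlip _ _ _ _
      _ ≤ L * (h + K * h) := by gcongr
      _ = L * (1 + K) * h := by ring
  have := abs_sub_sub_mul_le_of_hasDerivAt (g := fun t => F t (u t)) hh hu hF
  rwa [mul_assoc, ← sq] at this

end ODE

theorem abs_sub_lieTrotter_backwardEuler_le {f1 f2 : ℝ → ℝ → ℝ} {M : ℝ}
    (hlip1 : ∀ a x b y, |f1 a x - f1 b y| ≤ M * (|a - b| + |x - y|))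
    (hlip2 : ∀ a x b y, |f2 a x - f2 b y| ≤ M * (|a - b| + |x - y|))
    (hb1 : ∀ t x, |f1 t x| ≤ M) (hb2 : ∀ t x, |f2 t x| ≤ M)
    {h : ℝ} (hh : 0 ≤ h) (hMh : M * h ≤ 1 / 2) {u : ℝ → ℝ}
    (hu : ∀ t ∈ Icc 0 h, HasDerivAt u (f1 t (u t) + f2 t (u t)) t) {vtil v1 : ℝ}
    (hvtil : vtil = u 0 + h * f1 h vtil) (hv1 : v1 = vtil + h * f2 h v1) :
    |u h - v1| ≤ (14 * M ^ 2 + 4 * M) * h ^ 2 := by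
  have hM : 0 ≤ M := (abs_nonneg _).trans (hb1 0 0)
  have hdefect : |u h - u 0 - h * (f1 h (u h) + f2 h (u h))| ≤ 2 * M * (1 + 2 * M) * h ^ 2 :=
    abs_sub_backwardEuler_le (F := fun t x => f1 t x + f2 t x) hh
      (fun a x b y => by
        rw [add_sub_add_comm]
        linarith [hlip1 a x b y, hlip2 a x b y, abs_add_le (f1 a x - f1 b y) (f2 a x - f2 b y)])
      (fun t x => by linarith [hb1 t x, hb2 t x, abs_add_le (f1 t x) (f2 t x)]) hu
  have hexact : |u h - u 0| ≤ 2 * M * h := by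
    simpa [abs_of_nonneg hh] using abs_sub_le_of_hasDerivAt_of_abs_le hu
      (fun t _ => by linarith [hb1 t (u t), hb2 t (u t), abs_add_le (f1 t (u t)) (f2 t (u t))])
      (left_mem_Icc.2 hh) (right_mem_Icc.2 hh)
  have hstage : |vtil - u 0| ≤ M * h := by
    rw [hvtil, add_sub_cancel_left, abs_mul, abs_of_nonneg hh, mul_comm]
    exact mul_le_mul_of_nonneg_right (hb1 _ _) hh
  have hmid : |u h - vtil| ≤ 3 * M * h := by
    calc |u h - vtil| ≤ |u h - u 0| + |u 0 - vtil| := abs_sub_le _ _ _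
      _ ≤ 3 * M * h := by rw [abs_sub_comm (u 0)]; linarith
  have hsplit : u h - v1 = (u h - u 0 - h * (f1 h (u h) + f2 h (u h)))
      + h * (f1 h (u h) - f1 h vtil) + h * (f2 h (u h) - f2 h v1) := by
    linear_combination -hv1 - hvtil
  have hf1_stage : |h * (f1 h (u h) - f1 h vtil)| ≤ 3 * M ^ 2 * h ^ 2 := by
    rw [abs_mul, abs_of_nonneg hh]
    have := hlip1 h (u h) h vtil
    rw [sub_self, abs_zero, zero_add] at this
    nlinarith [mul_le_mul_of_nonneg_left hmid hM]
  have hf2_implicit : |h * (f2 h (u h) - f2 h v1)| ≤ M * h * |u h - v1| := by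
    rw [abs_mul, abs_of_nonneg hh]
    have := hlip2 h (u h) h v1
    rw [sub_self, abs_zero, zero_add] at this
    nlinarith
  have herr : |u h - v1| ≤ 2 * M * (1 + 2 * M) * h ^ 2 + 3 * M ^ 2 * h ^ 2
      + M * h * |u h - v1| := by
    rw [hsplit] at hf2_implicit ⊢
    linarith [abs_add_three (u h - u 0 - h * (f1 h (u h) + f2 h (u h)))
      (h * (f1 h (u h) - f1 h vtil)) (h * (f2 h (u h) - f2 h v1))]
  nlinarith [mul_le_mul_of_nonneg_right hMh (abs_nonneg (u h - v1))]

/-- Local truncation error of the fully discrete backward-Euler Lie–Trotter scheme: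
`ṽ = u0 + h f1(h, ṽ)`, `v1 = ṽ + h f2(h, v1)` satisfies `|u(h) − v1| ≤ C h²`. -/
theorem stmt_13 (f1 f2 : ℝ → ℝ → ℝ)
    (hf1 : ContDiff ℝ 2 (Function.uncurry f1))
    (hf2 : ContDiff ℝ 2 (Function.uncurry f2))
    (M : ℝ)
    (hM1 : ∀ i ≤ 2, ∀ p : ℝ × ℝ, ‖iteratedFDeriv ℝ i (Function.uncurry f1) p‖ ≤ M)
    (hM2 : ∀ i ≤ 2, ∀ p : ℝ × ℝ, ‖iteratedFDeriv ℝ i (Function.uncurry f2) p‖ ≤ M)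
    (u0 : ℝ) :
    ∃ C > (0:ℝ), ∃ h0 > (0:ℝ), ∀ h : ℝ, 0 < h → h ≤ h0 →
      ∀ u : ℝ → ℝ, u 0 = u0 →
        (∀ t ∈ Icc (0:ℝ) h, HasDerivAt u (f1 t (u t) + f2 t (u t)) t) →
        ∀ vtil v1 : ℝ,
          vtil = u0 + h * f1 h vtil →
          v1 = vtil + h * f2 h v1 →
          |u h - v1| ≤ C * h ^ 2 := by
  have hM : 0 ≤ M := (norm_nonneg _).trans (hM1 0 (by norm_num) 0)
  refine ⟨14 * M ^ 2 + 4 * M + 1, by positivity, 1 / (2 * (M + 1)), by positivity, ?_⟩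
  intro h hh hh0 u hu0 hu vtil v1 hvtil hv1
  subst hu0
  have hMh : M * h ≤ 1 / 2 := by
    rw [le_div_iff₀ (by positivity)] at hh0
    nlinarith
  calc |u h - v1| ≤ (14 * M ^ 2 + 4 * M) * h ^ 2 :=
        abs_sub_lieTrotter_backwardEuler_le
          (abs_sub_le_of_norm_iteratedFDeriv_one_le (hf1.differentiable (by norm_num))
            (hM1 1 (by norm_num)))
          (abs_sub_le_of_norm_iteratedFDeriv_one_le (hf2.differentiable (by norm_num))
            (hM2 1 (by norm_num)))
          (fun t x => by simpa using hM1 0 (by norm_num) (t, x))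
          (fun t x => by simpa using hM2 0 (by norm_num) (t, x))
          hh.le hMh hu hvtil hv1
    _ ≤ (14 * M ^ 2 + 4 * M + 1) * h ^ 2 := by nlinarith [sq_nonneg h]
end

section
/- Let g be C^{M+1} on [t_0, t_M] where t_m = t_0 + mh are uniform nodes, and ψ_m = g(t_m). Then for each 0 ≤ s ≤ M, the discrete derivative vectors d̂_s ψ satisfy ‖d̂_s ψ‖_∞ ≤ C_s for constants C_s depending on sup-norms of derivatives of g up to order M+1 but not on h; i.e., the discrete data set (t⃗, ψ⃗) possesses M degrees of smoothness in the sense of bounded (Ŝ,∞)-Sobolev norm as h → 0. -/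
/-!
The Lagrange basis on the nodes `t₀ + j h` is the basis on the integer nodes `j` composed with
`t ↦ (t - t₀) / h`, so its `s`-th derivatives carry a factor `h⁻ˢ`. Interpolation reproduces
polynomials of degree `< s`, whose `s`-th derivatives vanish. Hence the `s`-th derivative of the
interpolant only sees the remainders `g (t₀ + j h) - P (t₀ + j h) = O(hˢ)`, where `P` is the
Taylor polynomial of `g` at `t₀` of degree `< s`, and the two powers of `h` cancel.
-/

open Finset Polynomial
open scoped Nat

namespace Polynomial

theorem iterate_derivative_comp_sub_C_mul_C {R : Type*} [CommRing R] (p : R[X]) (b c : R)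
    (k : ℕ) :
    derivative^[k] (p.comp ((X - C b) * C c)) =
      C (c ^ k) * (derivative^[k] p).comp ((X - C b) * C c) := by
  induction k generalizing p with
  | zero => simp
  | succ k ih =>
    rw [Function.iterate_succ_apply', Function.iterate_succ_apply', ih, derivative_C_mul,
      derivative_comp]
    simp only [derivative_mul, derivative_sub, derivative_X, derivative_C, sub_zero, one_mul,
      mul_zero, add_zero, pow_succ, C_mul]
    ring

theorem iterate_deriv_eval {𝕜 : Type*} [NontriviallyNormedField 𝕜] (p : 𝕜[X]) (k : ℕ) :
    deriv^[k] (fun x => p.eval x) = fun x => (derivative^[k] p).eval x := by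
  induction k generalizing p with
  | zero => rfl
  | succ k ih =>
    rw [Function.iterate_succ_apply, Function.iterate_succ_apply, ← ih]
    congr 1
    ext x
    exact Polynomial.deriv p

end Polynomial

namespace Lagrange

variable {F : Type*} [Field F] {ι : Type*} [DecidableEq ι]

theorem basisDivisor_add_mul {a : F} (ha : a ≠ 0) (b x y : F) :
    basisDivisor (b + x * a) (b + y * a) = (basisDivisor x y).comp ((X - C b) * C a⁻¹) := by
  have hy : C y = C (y * a) * C a⁻¹ := by rw [← C_mul, mul_inv_cancel_right₀ ha]
  simp only [basisDivisor, mul_comp, sub_comp, X_comp, C_comp]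
  rw [show b + x * a - (b + y * a) = (x - y) * a by ring, mul_inv, map_mul, hy, map_add]
  ring

theorem basis_add_mul {a : F} (ha : a ≠ 0) (b : F) (s : Finset ι) (w : ι → F) (i : ι) :
    Lagrange.basis s (fun j => b + w j * a) i =
      (Lagrange.basis s w i).comp ((X - C b) * C a⁻¹) := by
  simp only [Lagrange.basis, Polynomial.prod_comp, basisDivisor_add_mul ha]

theorem eval_interpolate_eq_sum_prod (s : Finset ι) (v r : ι → F) (x : F) :
    (interpolate s v r).eval x = ∑ i ∈ s, (∏ j ∈ s.erase i, (x - v j) / (v i - v j)) * r i := by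
  simp only [interpolate_apply, eval_finsetSum, eval_mul, eval_C, Lagrange.basis, eval_prod,
    basisDivisor, eval_sub, eval_X]
  refine sum_congr rfl fun i _ => ?_
  rw [mul_comm]
  congr 1
  exact prod_congr rfl fun j _ => by rw [div_eq_inv_mul]

theorem iterate_derivative_interpolate_eq_sum_sub {s : Finset ι} {v : ι → F}
    (hvs : Set.InjOn v s) {k : ℕ} (hk : k ≤ #s) {P : F[X]} (hP : P.degree < k) (r : ι → F) :
    derivative^[k] (interpolate s v r) =
      ∑ i ∈ s, C (r i - P.eval (v i)) * derivative^[k] (Lagrange.basis s v i) := by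
  have hPs : P.degree < #s := hP.trans_le (by exact_mod_cast hk)
  conv_lhs =>
    rw [← sub_zero (derivative^[k] (interpolate s v r)),
      ← iterate_derivative_eq_zero_of_degree_lt hP, ← iterate_derivative_sub,
      eq_interpolate hvs hPs, ← map_sub, interpolate_apply, iterate_derivative_sum]
  simp only [iterate_derivative_C_mul, Pi.sub_apply]

end Lagrange

noncomputable def taylorPolynomial (g : ℝ → ℝ) (n : ℕ) (a : ℝ) : ℝ[X] :=
  ∑ k ∈ range (n + 1), C (iteratedDeriv k g a / k !) * (X - C a) ^ k

theorem degree_taylorPolynomial_lt (g : ℝ → ℝ) (n : ℕ) (a : ℝ) :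
    (taylorPolynomial g n a).degree < ↑(n + 1) := by
  refine (degree_le_of_natDegree_le ?_).trans_lt (by exact_mod_cast n.lt_succ_self)
  refine natDegree_sum_le_of_forall_le _ _ fun k hk => (natDegree_C_mul_le _ _).trans ?_
  rw [natDegree_pow, natDegree_X_sub_C, mul_one]
  exact Nat.lt_succ_iff.mp (mem_range.mp hk)

theorem taylorWithinEval_eq_eval_taylorPolynomial {g : ℝ → ℝ} {n : ℕ} (hg : ContDiff ℝ n g)
    {s : Set ℝ} (hs : UniqueDiffOn ℝ s) {a : ℝ} (ha : a ∈ s) (x : ℝ) :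
    taylorWithinEval g n s a x = (taylorPolynomial g n a).eval x := by
  simp only [taylor_within_apply, taylorPolynomial, eval_finsetSum, eval_mul, eval_C, eval_pow,
    eval_sub, eval_X, smul_eq_mul]
  refine sum_congr rfl fun k hk => ?_
  rw [iteratedDerivWithin_eq_iteratedDeriv hs
    (hg.contDiffAt.of_le (by exact_mod_cast Nat.lt_succ_iff.mp (mem_range.mp hk))) ha]
  ring

theorem abs_sub_eval_taylorPolynomial_le {g : ℝ → ℝ} {n : ℕ} (hg : ContDiff ℝ (n + 1) g) {K : ℝ}
    (hK : ∀ t, |iteratedDeriv (n + 1) g t| ≤ K) (a x : ℝ) :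
    |g x - (taylorPolynomial g n a).eval x| ≤ K * |x - a| ^ (n + 1) / (n + 1)! := by
  rcases eq_or_ne a x with rfl | hax
  · rw [← taylorWithinEval_eq_eval_taylorPolynomial hg.of_succ uniqueDiffOn_univ (Set.mem_univ a),
      taylorWithinEval_self]
    simp
  obtain ⟨y, -, hy⟩ := taylor_mean_remainder_lagrange_iteratedDeriv hax hg.contDiffOn
  rw [← taylorWithinEval_eq_eval_taylorPolynomial hg.of_succ (uniqueDiffOn_uIcc hax)
    Set.left_mem_uIcc, hy, abs_div, abs_mul, abs_pow, Nat.abs_cast]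
  gcongr
  exact hK y

theorem exists_degree_lt_abs_sub_eval_le {g : ℝ → ℝ} {s : ℕ} (hg : ContDiff ℝ s g) {K : ℝ}
    (hK : ∀ t, |iteratedDeriv s g t| ≤ K) (a : ℝ) :
    ∃ P : ℝ[X], P.degree < s ∧ ∀ x, |g x - P.eval x| ≤ K * |x - a| ^ s / s ! := by
  cases s with
  | zero => exact ⟨0, by simp, fun x => by simpa using hK x⟩
  | succ n =>
    exact ⟨taylorPolynomial g n a, degree_taylorPolynomial_lt g n a,
      abs_sub_eval_taylorPolynomial_le (by exact_mod_cast hg) hK a⟩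

theorem abs_eval_iterate_derivative_interpolate_add_mul_le {ι : Type*} [Fintype ι]
    [DecidableEq ι] {w : ι → ℝ} (hw : Function.Injective w) {s : ℕ} (hs : s ≤ Fintype.card ι)
    {g : ℝ → ℝ} (hg : ContDiff ℝ s g) {K : ℝ} (hK : ∀ t, |iteratedDeriv s g t| ≤ K) (b : ℝ)
    {h : ℝ} (hh : h ≠ 0) (x : ℝ) :
    |(derivative^[s] (Lagrange.interpolate univ (fun i => b + w i * h)
        (fun i => g (b + w i * h)))).eval (b + x * h)| ≤
      ∑ i, K * |w i| ^ s / s ! * |(derivative^[s] (Lagrange.basis univ w i)).eval x| := by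
  obtain ⟨P, hPdeg, hP⟩ := exists_degree_lt_abs_sub_eval_le hg hK b
  have hv : Set.InjOn (fun i => b + w i * h) (univ : Finset ι) := fun i _ j _ hij =>
    hw (mul_right_cancel₀ hh (add_left_cancel hij))
  have hx : ((X - C b) * C h⁻¹).eval (b + x * h) = x := by
    simp only [eval_mul, eval_sub, eval_X, eval_C]
    field_simp
    ring
  rw [Lagrange.iterate_derivative_interpolate_eq_sum_sub hv (by simpa using hs) hPdeg,
    eval_finsetSum]
  refine (abs_sum_le_sum_abs _ _).trans (sum_le_sum fun i _ => ?_)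
  rw [Lagrange.basis_add_mul hh, iterate_derivative_comp_sub_C_mul_C, eval_mul, eval_mul,
    eval_C, eval_C, eval_comp, hx]
  calc |(g (b + w i * h) - P.eval (b + w i * h)) *
        (h⁻¹ ^ s * (derivative^[s] (Lagrange.basis univ w i)).eval x)|
      = |g (b + w i * h) - P.eval (b + w i * h)| * |h⁻¹| ^ s *
          |(derivative^[s] (Lagrange.basis univ w i)).eval x| := by
        rw [abs_mul, abs_mul, abs_pow, mul_assoc]
    _ ≤ K * |w i * h| ^ s / s ! * |h⁻¹| ^ s *
          |(derivative^[s] (Lagrange.basis univ w i)).eval x| := by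
        gcongr
        simpa using hP (b + w i * h)
    _ = K * |w i| ^ s / s ! * |(derivative^[s] (Lagrange.basis univ w i)).eval x| := by
        rw [abs_mul, mul_pow, abs_inv, inv_pow]
        field_simp

/-- Sampling a `C^{M+1}` function on `M+1` uniform nodes yields `M` degrees of discrete
smoothness: the discrete derivatives of the Lagrange interpolant at the nodes are
bounded uniformly in the node spacing `h`. -/
theorem stmt_15 (M : ℕ) (t0 : ℝ) (g : ℝ → ℝ)
    (hg : ContDiff ℝ (M + 1 : ℕ) g)
    (K : ℝ) (hK : ∀ s ≤ M + 1, ∀ t : ℝ, |iteratedDeriv s g t| ≤ K) :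
    ∃ C : ℝ, ∀ h : ℝ, 0 < h → h ≤ 1 → ∀ s ≤ M, ∀ m : Fin (M + 1),
      |deriv^[s] (fun t => ∑ j : Fin (M + 1),
          (∏ n ∈ univ.erase j, (t - (t0 + (n : ℕ) * h)) /
            ((t0 + (j : ℕ) * h) - (t0 + (n : ℕ) * h))) * g (t0 + (j : ℕ) * h))
        (t0 + (m : ℕ) * h)| ≤ C := by
  set w : Fin (M + 1) → ℝ := fun j => ((j : ℕ) : ℝ)
  have hw : Function.Injective w := Nat.cast_injective.comp Fin.val_injective
  obtain ⟨C, hC⟩ := (Set.finite_range fun sm : Fin (M + 1) × Fin (M + 1) =>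
    ∑ j, K * |w j| ^ (sm.1 : ℕ) / (sm.1 : ℕ)! *
      |(derivative^[sm.1] (Lagrange.basis univ w j)).eval (w sm.2)|).bddAbove
  refine ⟨C, fun h hh _ s hs m => ?_⟩
  rw [← funext fun t => Lagrange.eval_interpolate_eq_sum_prod univ (fun j => t0 + w j * h)
    (fun j => g (t0 + w j * h)) t, iterate_deriv_eval]
  exact (abs_eval_iterate_derivative_interpolate_add_mul_le hw (by rw [Fintype.card_fin]; omega)
    (hg.of_le (by exact_mod_cast (by omega : s ≤ M + 1))) (hK s (by omega)) t0 hh.ne' (w m)).trans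
    (hC ⟨(⟨s, by omega⟩, m), rfl⟩)
end
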